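/- arXiv:2204.01448 — 2 statements merged into one kernel-verified Lean document; each statement's English description precedes it below -/
import Mathlib

section
/- Let x ∈ D (i.e., Dh(x) is surjective) and let β > β₁(x) := σ₁(Dh(x))·C_λ(x) / (2 σ_min(Dh(x))²). If x is a local minimizer of Fletcher's augmented Lagrangian g (over a neighborhood of x in E), then x is a local minimizer of the constrained problem: h(x) = 0 and there is a neighborhood U of x such that f(x) ≤ f(y) for every y ∈ U with h(y) = 0. -/
open scoped RealInnerProductSpace ContDiff

noncomputable section

variable {E : Type*} [NormedAddCommGroup E] [InnerProductSpace ℝ E] [FiniteDimensional ℝ E] {m : ℕ}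

/-- The least-squares multipliers `λ(x) = (Dh(x) ∘ Dh(x)*)⁻¹ (Dh(x)[∇f(x)]) = (Dh(x)*)† ∇f(x)`.
(When `Dh(x)` is surjective, `Dh(x) ∘ Dh(x)*` is bijective and `Function.invFun` returns
its genuine inverse applied to `Dh(x)[∇f(x)]`.) -/
def lam (f : E → ℝ) (h : E → EuclideanSpace ℝ (Fin m)) (x : E) : EuclideanSpace ℝ (Fin m) :=
  Function.invFun
    (fun y => fderiv ℝ h x (ContinuousLinearMap.adjoint (fderiv ℝ h x) y))
    (fderiv ℝ h x (gradient f x))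

/-- Fletcher's augmented Lagrangian `g(x) = f(x) − ⟪λ(x), h(x)⟫ + β‖h(x)‖²`. -/
def flal (f : E → ℝ) (h : E → EuclideanSpace ℝ (Fin m)) (β : ℝ) (x : E) : ℝ :=
  f x - ⟪lam f h x, h x⟫ + β * ‖h x‖ ^ 2

/-- The smallest singular value `σ_min(A) = min_{‖y‖=1} ‖A*[y]‖` of a linear map. -/
def sigmaMin (A : E →L[ℝ] EuclideanSpace ℝ (Fin m)) : ℝ :=
  sInf ((fun y => ‖ContinuousLinearMap.adjoint A y‖) '' {y : EuclideanSpace ℝ (Fin m) | ‖y‖ = 1})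

/-- `C_λ(x) = ‖Dλ(x)‖`, the operator norm of the derivative of the multipliers. -/
def Clam (f : E → ℝ) (h : E → EuclideanSpace ℝ (Fin m)) (x : E) : ℝ :=
  ‖fderiv ℝ (lam f h) x‖

/-- `β₁(x) = σ₁(Dh(x))·C_λ(x) / (2σ_min(Dh(x))²)`. -/
def beta1 (f : E → ℝ) (h : E → EuclideanSpace ℝ (Fin m)) (x : E) : ℝ :=
  ‖fderiv ℝ h x‖ * Clam f h x / (2 * sigmaMin (fderiv ℝ h x) ^ 2)

/-- `β₂(x) = C_λ(x)/σ_min(Dh(x))`. -/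
def beta2 (f : E → ℝ) (h : E → EuclideanSpace ℝ (Fin m)) (x : E) : ℝ :=
  Clam f h x / sigmaMin (fderiv ℝ h x)

/-- `β₃(x) = 1/σ_min(Dh(x))`. -/
def beta3 (h : E → EuclideanSpace ℝ (Fin m)) (x : E) : ℝ :=
  1 / sigmaMin (fderiv ℝ h x)

lemma adjoint_inj (A : E →L[ℝ] EuclideanSpace ℝ (Fin m))
    (hs : Function.Surjective A) {y} (hy : ContinuousLinearMap.adjoint A y = 0) : y = 0 := by
  obtain ⟨w, hw⟩ := hs y
  have h1 : ⟪y, y⟫ = 0 := by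
    calc ⟪y, y⟫ = ⟪y, A w⟫ := by rw [hw]
    _ = ⟪ContinuousLinearMap.adjoint A y, w⟫ :=
        (ContinuousLinearMap.adjoint_inner_left A w y).symm
    _ = 0 := by rw [hy, inner_zero_left]
  exact inner_self_eq_zero.mp h1

lemma sigmaMin_bdd (A : E →L[ℝ] EuclideanSpace ℝ (Fin m)) :
    BddBelow ((fun y => ‖ContinuousLinearMap.adjoint A y‖) ''
      {y : EuclideanSpace ℝ (Fin m) | ‖y‖ = 1}) := by
  refine ⟨0, ?_⟩
  rintro _ ⟨y, -, rfl⟩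
  positivity

lemma norm_inv_smul_self' {z : EuclideanSpace ℝ (Fin m)} (hz : z ≠ 0) :
    ‖(‖z‖⁻¹ • z : EuclideanSpace ℝ (Fin m))‖ = 1 := by
  rw [norm_smul, norm_inv, norm_norm, inv_mul_cancel₀ (norm_ne_zero_iff.mpr hz)]

lemma sigmaMin_mul_le (A : E →L[ℝ] EuclideanSpace ℝ (Fin m))
    (z : EuclideanSpace ℝ (Fin m)) :
    sigmaMin A * ‖z‖ ≤ ‖ContinuousLinearMap.adjoint A z‖ := by
  rcases eq_or_ne z 0 with rfl | hz
  · simp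
  · have hnz : ‖z‖ ≠ 0 := norm_ne_zero_iff.mpr hz
    have h2 : sigmaMin A ≤ ‖ContinuousLinearMap.adjoint A (‖z‖⁻¹ • z)‖ :=
      csInf_le (sigmaMin_bdd A) ⟨_, norm_inv_smul_self' hz, rfl⟩
    rw [map_smul, norm_smul, norm_inv, norm_norm] at h2
    have h3 : (‖z‖⁻¹ * ‖ContinuousLinearMap.adjoint A z‖) * ‖z‖ =
        ‖ContinuousLinearMap.adjoint A z‖ := by field_simp
    nlinarith [mul_le_mul_of_nonneg_right h2 (norm_nonneg z)]

lemma sigmaMin_pos (A : E →L[ℝ] EuclideanSpace ℝ (Fin m))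
    [Nontrivial (EuclideanSpace ℝ (Fin m))]
    (hs : Function.Surjective A) : 0 < sigmaMin A := by
  have hset : {y : EuclideanSpace ℝ (Fin m) | ‖y‖ = 1} =
      Metric.sphere (0 : EuclideanSpace ℝ (Fin m)) 1 := by
    ext y; simp [mem_sphere_zero_iff_norm]
  have hcpt : IsCompact ((fun y => ‖ContinuousLinearMap.adjoint A y‖) ''
      {y : EuclideanSpace ℝ (Fin m) | ‖y‖ = 1}) := by
    rw [hset]
    exact (isCompact_sphere 0 1).image ((ContinuousLinearMap.adjoint A).continuous.norm)
  obtain ⟨z0, hz0⟩ := exists_ne (0 : EuclideanSpace ℝ (Fin m))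
  have hne : ((fun y => ‖ContinuousLinearMap.adjoint A y‖) ''
      {y : EuclideanSpace ℝ (Fin m) | ‖y‖ = 1}).Nonempty :=
    ⟨_, _, norm_inv_smul_self' hz0, rfl⟩
  obtain ⟨y0, hy0, heq⟩ := hcpt.sInf_mem hne
  rw [show sInf _ = sigmaMin A from rfl] at heq
  rw [← heq]
  have h3 : y0 ≠ 0 := fun h0 => by simp [h0] at hy0
  have h4 : ContinuousLinearMap.adjoint A y0 ≠ 0 := fun hA => h3 (adjoint_inj A hs hA)
  exact norm_pos_iff.mpr h4

lemma adjoint_bdd : IsBoundedLinearMap ℝ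
    (fun B : E →L[ℝ] EuclideanSpace ℝ (Fin m) => ContinuousLinearMap.adjoint B) := by
  refine ⟨⟨fun B C => map_add _ _ _, fun c B => ?_⟩, 1, one_pos, fun B => ?_⟩
  · rw [LinearIsometryEquiv.map_smulₛₗ]
    simp
  · rw [LinearIsometryEquiv.norm_map, one_mul]

set_option maxHeartbeats 1000000 in
/-- If `Dh(x)` is surjective, `β > β₁(x)`, and `x` is a local minimizer of Fletcher's
augmented Lagrangian `g`, then `x` is a local minimizer of `min f s.t. h = 0`:
`h(x) = 0` and `f(x) ≤ f(y)` for all feasible `y` near `x`. -/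
theorem local_min_of_fletcher_is_local_min_of_problem
    (f : E → ℝ) (h : E → EuclideanSpace ℝ (Fin m))
    (hf : ContDiff ℝ ∞ f) (hh : ContDiff ℝ ∞ h)
    (x : E) (hsurj : Function.Surjective (fderiv ℝ h x))
    (β : ℝ) (hβ : β > beta1 f h x)
    (hloc : IsLocalMin (flal f h β) x) :
    h x = 0 ∧ ∀ᶠ y in nhds x, h y = 0 → f x ≤ f y := by
  have hle : (∞ : WithTop ℕ∞) + 1 ≤ ∞ := by simp
  have hA : ContDiff ℝ ∞ (fderiv ℝ h) := hh.fderiv_right hle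
  have hAdj : ContDiff ℝ ∞ (fun y => ContinuousLinearMap.adjoint (fderiv ℝ h y)) :=
    adjoint_bdd.contDiff.comp hA
  have hT : ContDiff ℝ ∞ (fun y => (fderiv ℝ h y).comp
      (ContinuousLinearMap.adjoint (fderiv ℝ h y))) := hA.clm_comp hAdj
  have hgrad : ContDiff ℝ ∞ (gradient f) := by
    have hdf : ContDiff ℝ ∞ (fderiv ℝ f) := hf.fderiv_right hle
    exact ((InnerProductSpace.toDual ℝ E).symm.toContinuousLinearEquiv
      |>.toContinuousLinearMap.contDiff).comp hdf
  have hb : ContDiff ℝ ∞ (fun y => fderiv ℝ h y (gradient f y)) := hA.clm_apply hgrad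
  set Tm := fun y => (fderiv ℝ h y).comp (ContinuousLinearMap.adjoint (fderiv ℝ h y)) with hTm
  have hTinj : Function.Injective ⇑(Tm x) := by
    rw [injective_iff_map_eq_zero]
    intro u hu
    have h5 : ⟪ContinuousLinearMap.adjoint (fderiv ℝ h x) u,
        ContinuousLinearMap.adjoint (fderiv ℝ h x) u⟫ = 0 := by
      rw [ContinuousLinearMap.adjoint_inner_left]
      have h6 : fderiv ℝ h x (ContinuousLinearMap.adjoint (fderiv ℝ h x) u) = 0 := hu
      rw [h6, inner_zero_right]
    exact adjoint_inj _ hsurj (inner_self_eq_zero.mp h5)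
  have hTbij : Function.Bijective ⇑(Tm x) :=
    ⟨hTinj, LinearMap.injective_iff_surjective.mp
      (show Function.Injective ⇑((Tm x : EuclideanSpace ℝ (Fin m) →ₗ[ℝ] EuclideanSpace ℝ (Fin m))) from hTinj)⟩
  have hTunit : IsUnit (Tm x) := ContinuousLinearMap.isUnit_iff_bijective.mpr hTbij
  have hev : ∀ᶠ y in nhds x, IsUnit (Tm y) :=
    hT.continuous.continuousAt (Units.isOpen.mem_nhds hTunit)
  have hformula : ∀ y, IsUnit (Tm y) →
      lam f h y = Ring.inverse (Tm y) (fderiv ℝ h y (gradient f y)) := by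
    intro y hy
    obtain ⟨u, hu⟩ := hy
    have hbij : Function.Bijective ⇑(Tm y) :=
      ContinuousLinearMap.isUnit_iff_bijective.mp ⟨u, hu⟩
    show Function.invFun ⇑(Tm y) (fderiv ℝ h y (gradient f y)) = _
    apply hbij.injective
    rw [Function.invFun_eq (hbij.surjective _), ← hu, Ring.inverse_unit,
      ← ContinuousLinearMap.mul_apply, Units.mul_inv, ContinuousLinearMap.one_apply]
  have hlamd : ContDiffAt ℝ ∞ (lam f h) x := by
    have h1 : ContDiffAt ℝ ∞ (fun y => Ring.inverse (Tm y)) x := by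
      obtain ⟨u, hu⟩ := hTunit
      have h2 := contDiffAt_ringInverse ℝ (n := ∞) u
      rw [hu] at h2
      exact h2.comp x hT.contDiffAt
    exact (h1.clm_apply hb.contDiffAt).congr_of_eventuallyEq
      (hev.mono fun y hy => hformula y hy)
  have hT0 : fderiv ℝ h x (ContinuousLinearMap.adjoint (fderiv ℝ h x) (lam f h x)) =
      fderiv ℝ h x (gradient f x) := Function.invFun_eq (hTbij.surjective _)
  -- derivative of flal at x
  have hone : (1 : WithTop ℕ∞) ≤ ∞ := by simp
  have hfd : HasFDerivAt f (fderiv ℝ f x) x := ((hf.differentiable (by simp)) x).hasFDerivAt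
  have hhd : HasFDerivAt h (fderiv ℝ h x) x := ((hh.differentiable (by simp)) x).hasFDerivAt
  set L := fderiv ℝ (lam f h) x with hLdef
  have hL : HasFDerivAt (lam f h) L x := (hlamd.differentiableAt (by simp)).hasFDerivAt
  set A := fderiv ℝ h x with hAdef
  set D : E →L[ℝ] ℝ :=
    fderiv ℝ f x - ((fderivInnerCLM ℝ (lam f h x, h x)).comp (L.prod A)) +
      β • ((fderivInnerCLM ℝ (h x, h x)).comp (A.prod A)) with hDdef
  have hDer : HasFDerivAt (flal f h β) D x := by
    have e1 := (hL.inner ℝ hhd)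
    have e2 := (hhd.inner ℝ hhd)
    have e3 := (hfd.sub e1).add (e2.const_mul β)
    have e4 : flal f h β = fun y => f y - ⟪lam f h y, h y⟫ + β * ⟪h y, h y⟫ := by
      funext y
      rw [flal, real_inner_self_eq_norm_sq]
    rw [e4]
    exact e3
  have hD0 : D = 0 := by
    have h7 := hloc.fderiv_eq_zero
    rwa [hDer.fderiv] at h7
  set v := ContinuousLinearMap.adjoint A (h x) with hvdef
  have hkey : (0 : ℝ) =
      fderiv ℝ f x v - (⟪lam f h x, A v⟫ + ⟪L v, h x⟫) + β * (⟪h x, A v⟫ + ⟪A v, h x⟫) := by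
    have h8 : D v = 0 := by rw [hD0]; rfl
    rw [hDdef] at h8
    simp only [ContinuousLinearMap.add_apply, ContinuousLinearMap.sub_apply,
      ContinuousLinearMap.smul_apply, ContinuousLinearMap.comp_apply,
      ContinuousLinearMap.prod_apply, fderivInnerCLM_apply, smul_eq_mul] at h8
    linarith [h8]
  have hgv : fderiv ℝ f x v = ⟪A (gradient f x), h x⟫ := by
    have h9 : ⟪gradient f x, v⟫ = fderiv ℝ f x v := InnerProductSpace.toDual_symm_apply
    rw [← h9, hvdef, ContinuousLinearMap.adjoint_inner_right]
  have hlamv : ⟪lam f h x, A v⟫ = ⟪A (gradient f x), h x⟫ := by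
    calc ⟪lam f h x, A v⟫
        = ⟪ContinuousLinearMap.adjoint A (lam f h x), v⟫ :=
          (ContinuousLinearMap.adjoint_inner_left A v (lam f h x)).symm
      _ = ⟪A (ContinuousLinearMap.adjoint A (lam f h x)), h x⟫ := by
          rw [hvdef, ContinuousLinearMap.adjoint_inner_right]
      _ = ⟪A (gradient f x), h x⟫ := by rw [hT0]
  have hhv : ⟪h x, A v⟫ = ‖v‖ ^ 2 := by
    calc ⟪h x, A v⟫ = ⟪ContinuousLinearMap.adjoint A (h x), v⟫ :=
          (ContinuousLinearMap.adjoint_inner_left A v (h x)).symm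
      _ = ‖v‖ ^ 2 := by rw [← hvdef, real_inner_self_eq_norm_sq]
  have hhv2 : ⟪A v, h x⟫ = ‖v‖ ^ 2 := by rw [real_inner_comm, hhv]
  have hkey2 : ⟪L v, h x⟫ = 2 * β * ‖v‖ ^ 2 := by
    rw [hgv, hlamv, hhv, hhv2] at hkey
    linarith
  -- main step: h x = 0
  have hzero : h x = 0 := by
    by_contra hne
    haveI : Nontrivial (EuclideanSpace ℝ (Fin m)) := ⟨⟨h x, 0, hne⟩⟩
    have hσ : 0 < sigmaMin A := sigmaMin_pos A hsurj
    have b1 : ⟪L v, h x⟫ ≤ ‖L‖ * ‖v‖ * ‖h x‖ :=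
      (real_inner_le_norm _ _).trans
        (mul_le_mul_of_nonneg_right (L.le_opNorm v) (norm_nonneg _))
    have b2 : ‖v‖ ≤ ‖A‖ * ‖h x‖ := by
      calc ‖v‖ ≤ ‖ContinuousLinearMap.adjoint A‖ * ‖h x‖ :=
            (ContinuousLinearMap.adjoint A).le_opNorm (h x)
        _ = ‖A‖ * ‖h x‖ := by rw [LinearIsometryEquiv.norm_map]
    have b3 : sigmaMin A * ‖h x‖ ≤ ‖v‖ := sigmaMin_mul_le A (h x)
    have hβ' : ‖A‖ * ‖L‖ < β * (2 * sigmaMin A ^ 2) := by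
      rw [beta1] at hβ
      rw [gt_iff_lt, div_lt_iff₀ (by positivity)] at hβ
      exact hβ
    have h2σ : 0 < 2 * sigmaMin A ^ 2 := by positivity
    have hβpos : 0 < β := by
      have h10 : 0 < β * (2 * sigmaMin A ^ 2) :=
        lt_of_le_of_lt (by positivity) hβ'
      rcases mul_pos_iff.mp h10 with ⟨h11, -⟩ | ⟨-, h12⟩
      · exact h11
      · linarith
    have hh0 : 0 < ‖h x‖ := norm_pos_iff.mpr hne
    have c2 : sigmaMin A ^ 2 * ‖h x‖ ^ 2 ≤ ‖v‖ ^ 2 := by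
      have := mul_self_le_mul_self (mul_nonneg hσ.le (norm_nonneg (h x))) b3
      nlinarith [this]
    have c3 : 2 * β * (sigmaMin A ^ 2 * ‖h x‖ ^ 2) ≤ 2 * β * ‖v‖ ^ 2 :=
      mul_le_mul_of_nonneg_left c2 (by positivity)
    have c5 : ‖L‖ * ‖v‖ * ‖h x‖ ≤ ‖L‖ * (‖A‖ * ‖h x‖) * ‖h x‖ :=
      mul_le_mul_of_nonneg_right
        (mul_le_mul_of_nonneg_left b2 (norm_nonneg L)) (norm_nonneg _)
    have c6 : (‖A‖ * ‖L‖) * (‖h x‖ * ‖h x‖) < (β * (2 * sigmaMin A ^ 2)) * (‖h x‖ * ‖h x‖) :=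
      mul_lt_mul_of_pos_right hβ' (mul_pos hh0 hh0)
    nlinarith [hkey2, b1, c3, c5, c6]
  refine ⟨hzero, ?_⟩
  have hloc' : ∀ᶠ y in nhds x, flal f h β x ≤ flal f h β y := hloc
  filter_upwards [hloc'] with y hy hy0
  have h1 : flal f h β x = f x := by simp [flal, hzero]
  have h2 : flal f h β y = f y := by simp [flal, hy0]
  linarith
end
end

section
/- For every x ∈ D (i.e., Dh(x) surjective) and every β ≥ 0, the gradient of Fletcher's augmented Lagrangian satisfies ∇g(x) = (∇f(x) − Dh(x)*[λ(x)]) + 2β·Dh(x)*[h(x)] − Dλ(x)*[h(x)], where the first term equals the orthogonal projection of ∇f(x) onto ker Dh(x) and the second term lies in (ker Dh(x))^⊥. In particular, if h(x) = 0 then ∇g(x) = ∇f(x) − Dh(x)*[λ(x)]. -/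
open scoped RealInnerProductSpace ContDiff

noncomputable section

variable {E : Type*} [NormedAddCommGroup E] [InnerProductSpace ℝ E] [FiniteDimensional ℝ E] {m : ℕ}

/-!
Because `Dh(x)` is onto, `Dh(x) ∘ Dh(x)*` is invertible, and invertibility persists near `x`;
there `λ = (Dh ∘ Dh*)⁻¹ (Dh ∇f)` is a composition of differentiable maps with `Ring.inverse`,
so the gradient formula is just the product rule for `⟪λ, h⟫` and `‖h‖²`. The normal equations
`Dh (Dh* λ) = Dh ∇f` put `∇f − Dh* λ` in `ker Dh`, while every `Dh* y` is orthogonal to `ker Dh`;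
this identifies `∇f − Dh* λ` as the orthogonal projection of `∇f` onto `ker Dh`.
-/

open ContinuousLinearMap Topology

section LeastSquares

variable {𝕜 V W : Type*} [RCLike 𝕜] [NormedAddCommGroup V] [InnerProductSpace 𝕜 V]
  [CompleteSpace V] [NormedAddCommGroup W] [InnerProductSpace 𝕜 W] [CompleteSpace W]

theorem ContinuousLinearMap.isUnit_comp_adjoint_of_surjective [FiniteDimensional 𝕜 W]
    {A : V →L[𝕜] W} (hA : Function.Surjective A) : IsUnit (A ∘L adjoint A) := by
  have hinj : Function.Injective (A ∘L adjoint A) := by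
    rw [← coe_coe, ← LinearMap.ker_eq_bot, ker_self_comp_adjoint, ← orthogonal_range,
      LinearMap.range_eq_top.mpr hA, Submodule.top_orthogonal_eq_bot]
  exact isUnit_iff_bijective.mpr
    ⟨hinj, LinearMap.injective_iff_surjective (f := ((A ∘L adjoint A) : W →ₗ[𝕜] W)).mp hinj⟩

theorem ContinuousLinearMap.invFun_eq_ringInverse {T : W →L[𝕜] W} (hT : IsUnit T) :
    Function.invFun T = Ring.inverse T := by
  funext b
  apply (isUnit_iff_bijective.mp hT).injective
  rw [Function.invFun_eq ((isUnit_iff_bijective.mp hT).surjective b), ← mul_apply_eq_comp,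
    Ring.mul_inverse_cancel _ hT, one_apply_eq_self]

theorem ContinuousLinearMap.adjoint_apply_mem_orthogonal_ker (A : V →L[𝕜] W) (y : W) :
    adjoint A y ∈ (LinearMap.ker (A : V →ₗ[𝕜] W))ᗮ := by
  intro u hu
  rw [LinearMap.mem_ker, coe_coe] at hu
  rw [adjoint_inner_right, hu, inner_zero_left]

theorem ContinuousLinearMap.starProjection_ker_eq_sub_adjoint [FiniteDimensional 𝕜 V]
    {A : V →L[𝕜] W} {v : V} {μ : W} (hμ : A (adjoint A μ) = A v) :
    (LinearMap.ker (A : V →ₗ[𝕜] W)).starProjection v = v - adjoint A μ := by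
  refine Submodule.eq_starProjection_of_mem_of_inner_eq_zero ?_ fun w hw => ?_
  · rw [LinearMap.mem_ker, coe_coe, map_sub, hμ, sub_self]
  · rw [sub_sub_cancel]
    exact (Submodule.mem_orthogonal' _ _).mp (A.adjoint_apply_mem_orthogonal_ker μ) w hw

end LeastSquares

section Calculus

variable {V W : Type*} [NormedAddCommGroup V] [InnerProductSpace ℝ V] [CompleteSpace V]
  [NormedAddCommGroup W] [InnerProductSpace ℝ W] [CompleteSpace W]

theorem DifferentiableAt.adjoint {U : Type*} [NormedAddCommGroup U] [NormedSpace ℝ U]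
    {B : U → (V →L[ℝ] W)} {x : U} (hB : DifferentiableAt ℝ B x) :
    DifferentiableAt ℝ (fun z => adjoint (B z)) x :=
  (ContinuousLinearMap.adjoint (𝕜 := ℝ) (E := V) (F := W)).toContinuousLinearEquiv
    |>.differentiableAt.comp x hB

theorem hasGradientAt_sub_inner_add_mul_norm_sq {f : V → ℝ} {l h : V → W} {x f' : V}
    {L H : V →L[ℝ] W} (hf : HasGradientAt f f' x) (hl : HasFDerivAt l L x)
    (hh : HasFDerivAt h H x) (β : ℝ) :
    HasGradientAt (fun z => f z - ⟪l z, h z⟫ + β * ‖h z‖ ^ 2)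
      (f' - (adjoint L (h x) + adjoint H (l x)) + (2 * β) • adjoint H (h x)) x := by
  rw [hasGradientAt_iff_hasFDerivAt] at hf ⊢
  refine ((hf.sub (hl.inner ℝ hh)).add (hh.norm_sq.const_mul β)).congr_fderiv ?_
  ext v
  simp only [add_apply, sub_apply, InnerProductSpace.toDual_apply_apply, comp_apply,
    ContinuousLinearMap.prod_apply, fderivInnerCLM_apply, real_inner_comm, smul_apply,
    coe_innerSL_apply, nsmul_eq_mul, Nat.cast_ofNat, smul_eq_mul, map_add, map_sub, map_smul,
    adjoint_inner_left]
  ring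

theorem ContDiffAt.differentiableAt_gradient {f : V → ℝ} {x : V} (hf : ContDiffAt ℝ 2 f x) :
    DifferentiableAt ℝ (gradient f) x :=
  (InnerProductSpace.toDual ℝ V).symm.toContinuousLinearEquiv.differentiableAt.comp x
    ((hf.fderiv_right (m := 1) le_rfl).differentiableAt one_ne_zero)

end Calculus

section Multipliers

variable {f : E → ℝ} {h : E → EuclideanSpace ℝ (Fin m)} {x : E}

theorem lam_eq_ringInverse (hx : IsUnit (fderiv ℝ h x ∘L adjoint (fderiv ℝ h x))) :
    lam f h x =
      Ring.inverse (fderiv ℝ h x ∘L adjoint (fderiv ℝ h x)) (fderiv ℝ h x (gradient f x)) :=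
  congrFun (invFun_eq_ringInverse hx) _

theorem fderiv_adjoint_lam (hsurj : Function.Surjective (fderiv ℝ h x)) :
    fderiv ℝ h x (adjoint (fderiv ℝ h x) (lam f h x)) = fderiv ℝ h x (gradient f x) :=
  Function.invFun_eq
    ((isUnit_iff_bijective.mp (isUnit_comp_adjoint_of_surjective hsurj)).surjective _)

theorem differentiableAt_lam (hf : ContDiffAt ℝ 2 f x) (hh : ContDiffAt ℝ 2 h x)
    (hsurj : Function.Surjective (fderiv ℝ h x)) : DifferentiableAt ℝ (lam f h) x := by
  have hDh : DifferentiableAt ℝ (fderiv ℝ h) x :=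
    (hh.fderiv_right (m := 1) le_rfl).differentiableAt one_ne_zero
  have hT : DifferentiableAt ℝ (fun z => fderiv ℝ h z ∘L adjoint (fderiv ℝ h z)) x :=
    hDh.clm_comp hDh.adjoint
  have hunit := isUnit_comp_adjoint_of_surjective hsurj
  have hunit_near : ∀ᶠ z in 𝓝 x, IsUnit (fderiv ℝ h z ∘L adjoint (fderiv ℝ h z)) :=
    hT.continuousAt.eventually_mem (Units.isOpen.mem_nhds hunit)
  refine ((hT.inverse hunit).clm_apply (hDh.clm_apply hf.differentiableAt_gradient))
    |>.congr_of_eventuallyEq ?_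
  filter_upwards [hunit_near] with z hz using lam_eq_ringInverse hz

end Multipliers

theorem gradient_of_fletcher_augmented_lagrangian_general
    (f : E → ℝ) (h : E → EuclideanSpace ℝ (Fin m))
    (hf : ContDiff ℝ ∞ f) (hh : ContDiff ℝ ∞ h)
    (x : E) (hsurj : Function.Surjective (fderiv ℝ h x))
    (β : ℝ) :
    gradient (flal f h β) x =
      (gradient f x - ContinuousLinearMap.adjoint (fderiv ℝ h x) (lam f h x))
        + (2 * β) • ContinuousLinearMap.adjoint (fderiv ℝ h x) (h x)
        - ContinuousLinearMap.adjoint (fderiv ℝ (lam f h) x) (h x) ∧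
    gradient f x - ContinuousLinearMap.adjoint (fderiv ℝ h x) (lam f h x)
      = ↑(Submodule.orthogonalProjectionOnto (LinearMap.ker (fderiv ℝ h x : E →ₗ[ℝ] EuclideanSpace ℝ (Fin m))) (gradient f x)) ∧
    ContinuousLinearMap.adjoint (fderiv ℝ h x) (h x) ∈ (LinearMap.ker (fderiv ℝ h x : E →ₗ[ℝ] EuclideanSpace ℝ (Fin m)))ᗮ ∧
    (h x = 0 → gradient (flal f h β) x =
      gradient f x - ContinuousLinearMap.adjoint (fderiv ℝ h x) (lam f h x)) := by
  have hf2 : ContDiffAt ℝ 2 f x := (hf.of_le ENat.LEInfty.out).contDiffAt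
  have hh2 : ContDiffAt ℝ 2 h x := (hh.of_le ENat.LEInfty.out).contDiffAt
  have hgrad : gradient (flal f h β) x =
      (gradient f x - adjoint (fderiv ℝ h x) (lam f h x))
        + (2 * β) • adjoint (fderiv ℝ h x) (h x) - adjoint (fderiv ℝ (lam f h) x) (h x) := by
    have hG : HasGradientAt (flal f h β) _ x :=
      hasGradientAt_sub_inner_add_mul_norm_sq (hf2.differentiableAt two_ne_zero).hasGradientAt
        (differentiableAt_lam hf2 hh2 hsurj).hasFDerivAt
        (hh2.differentiableAt two_ne_zero).hasFDerivAt β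
    rw [hG.gradient]
    abel
  refine ⟨hgrad, ?_, adjoint_apply_mem_orthogonal_ker _ _, fun hx0 => ?_⟩
  · rw [← Submodule.starProjection_apply,
      starProjection_ker_eq_sub_adjoint (fderiv_adjoint_lam hsurj)]
  · rw [hgrad, hx0, map_zero, map_zero, smul_zero, add_zero, sub_zero]

/-- Gradient formula for Fletcher's augmented Lagrangian:
`∇g(x) = (∇f(x) − Dh(x)*[λ(x)]) + 2β·Dh(x)*[h(x)] − Dλ(x)*[h(x)]`, where the first
term is the orthogonal projection of `∇f(x)` onto `ker Dh(x)` and the second term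
is orthogonal to `ker Dh(x)`. In particular `∇g(x) = ∇f(x) − Dh(x)*[λ(x)]` when
`h(x) = 0`. -/
theorem gradient_of_fletcher_augmented_lagrangian
    (f : E → ℝ) (h : E → EuclideanSpace ℝ (Fin m))
    (hf : ContDiff ℝ ∞ f) (hh : ContDiff ℝ ∞ h)
    (x : E) (hsurj : Function.Surjective (fderiv ℝ h x))
    (β : ℝ) (hβ : 0 ≤ β) :
    gradient (flal f h β) x =
      (gradient f x - ContinuousLinearMap.adjoint (fderiv ℝ h x) (lam f h x))
        + (2 * β) • ContinuousLinearMap.adjoint (fderiv ℝ h x) (h x)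
        - ContinuousLinearMap.adjoint (fderiv ℝ (lam f h) x) (h x) ∧
    gradient f x - ContinuousLinearMap.adjoint (fderiv ℝ h x) (lam f h x)
      = ↑(Submodule.orthogonalProjectionOnto (LinearMap.ker (fderiv ℝ h x : E →ₗ[ℝ] EuclideanSpace ℝ (Fin m))) (gradient f x)) ∧
    ContinuousLinearMap.adjoint (fderiv ℝ h x) (h x) ∈ (LinearMap.ker (fderiv ℝ h x : E →ₗ[ℝ] EuclideanSpace ℝ (Fin m)))ᗮ ∧
    (h x = 0 → gradient (flal f h β) x =
      gradient f x - ContinuousLinearMap.adjoint (fderiv ℝ h x) (lam f h x)) :=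
  gradient_of_fletcher_augmented_lagrangian_general f h hf hh x hsurj β
end
end
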